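/- arXiv:2106.10621 — 2 statements merged into one kernel-verified Lean document; each statement's English description precedes it below -/
import Mathlib

section
/- If two empirical Hit-Ratio curves satisfy HR₁@K ≥ HR₂@K for all 1 ≤ K ≤ N, then for every sampling size n and every 1 ≤ k ≤ n, the expected sampling Hit-Ratios satisfy E[SHR₁@k] ≥ E[SHR₂@k], where E[SHRᵢ@k] = ∑_{R=1}^N Wⁱ_R · CDF_Binomial(k−1; n−1, (R−1)/(N−1)). -/
/-!
Write `E[SHRᵢ@k] = ∑_R Wⁱ_R φ R`, where `φ R` is the probability that a binomial variable with
`n - 1` trials and success probability `(R - 1)/(N - 1)` is below `k`. The binomial CDF decreases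
in the success probability (induction on the number of trials through Pascal's rule), so `φ` is
antitone on the ranks `1, …, N`, and summation by parts turns the dominance
`HR₂@K ≤ HR₁@K` of the partial sums into the inequality.
-/

open Finset

noncomputable def binomCDF (m k : ℕ) (x : ℝ) : ℝ :=
  ∑ l ∈ range k, (m.choose l : ℝ) * x ^ l * (1 - x) ^ (m - l)

lemma binomCDF_nonneg (m k : ℕ) {x : ℝ} (hx : x ∈ Set.Icc (0 : ℝ) 1) : 0 ≤ binomCDF m k x :=
  sum_nonneg fun l _ => by have := sub_nonneg.2 hx.2; have := hx.1; positivity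

lemma binomCDF_le_binomCDF_succ (m k : ℕ) {x : ℝ} (hx : x ∈ Set.Icc (0 : ℝ) 1) :
    binomCDF m k x ≤ binomCDF m (k + 1) x := by
  rw [binomCDF, binomCDF, sum_range_succ, le_add_iff_nonneg_right]
  have := sub_nonneg.2 hx.2; have := hx.1
  positivity

lemma choose_mul_pow_mul_pow_succ (m l : ℕ) (x : ℝ) :
    ((m + 1).choose (l + 1) : ℝ) * x ^ (l + 1) * (1 - x) ^ (m + 1 - (l + 1)) =
      (1 - x) * ((m.choose (l + 1) : ℝ) * x ^ (l + 1) * (1 - x) ^ (m - (l + 1))) +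
        x * ((m.choose l : ℝ) * x ^ l * (1 - x) ^ (m - l)) := by
  rw [Nat.choose_succ_succ', Nat.add_sub_add_right]
  rcases lt_or_ge l m with hlm | hml
  · rw [show m - l = m - (l + 1) + 1 by omega]
    push_cast
    ring
  · rw [Nat.choose_eq_zero_of_lt (by omega : m < l + 1), Nat.sub_eq_zero_of_le hml,
      Nat.sub_eq_zero_of_le (by omega : m ≤ l + 1)]
    push_cast
    ring

/-- Pascal's rule for the binomial distribution: condition on the last of the `m + 1` trials. -/
lemma binomCDF_succ_succ (m k : ℕ) (x : ℝ) :
    binomCDF (m + 1) (k + 1) x = (1 - x) * binomCDF m (k + 1) x + x * binomCDF m k x := by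
  rw [binomCDF, binomCDF, binomCDF, sum_range_succ', sum_range_succ' _ k, mul_add, mul_sum,
    mul_sum]
  simp only [choose_mul_pow_mul_pow_succ, sum_add_distrib, Nat.choose_zero_right, pow_zero,
    Nat.sub_zero]
  ring

lemma binomCDF_antitoneOn (m k : ℕ) : AntitoneOn (binomCDF m k) (Set.Icc 0 1) := by
  induction m generalizing k with
  | zero =>
    intro x _ y _ _
    rcases k with _ | k <;> simp [binomCDF, sum_range_succ']
  | succ m ih =>
    intro x hx y hy hxy
    rcases k with _ | k
    · simp [binomCDF]
    rw [binomCDF_succ_succ, binomCDF_succ_succ]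
    have hy₀ := hy.1
    have hy₁ := sub_nonneg.2 hy.2
    have hgap := sub_nonneg.2 (binomCDF_le_binomCDF_succ m k hx)
    calc (1 - y) * binomCDF m (k + 1) y + y * binomCDF m k y
        ≤ (1 - y) * binomCDF m (k + 1) x + y * binomCDF m k x := by
          gcongr
          exacts [ih (k + 1) hx hy hxy, ih k hx hy hxy]
      _ = binomCDF m (k + 1) x - y * (binomCDF m (k + 1) x - binomCDF m k x) := by ring
      _ ≤ binomCDF m (k + 1) x - x * (binomCDF m (k + 1) x - binomCDF m k x) := by gcongr
      _ = (1 - x) * binomCDF m (k + 1) x + x * binomCDF m k x := by ring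

/-- Abel summation, in the form of the invariant `f K * ∑_{R ≤ K} d R ≤ ∑_{R ≤ K} d R * f R`. -/
lemma sum_Icc_mul_nonneg_of_antitoneOn {N : ℕ} {d f : ℕ → ℝ} (hf : AntitoneOn f (Set.Icc 1 N))
    (hfN : 0 ≤ f N) (hd : ∀ K, 1 ≤ K → K ≤ N → 0 ≤ ∑ R ∈ Icc 1 K, d R) :
    0 ≤ ∑ R ∈ Icc 1 N, d R * f R := by
  have key : ∀ K ≤ N, f K * ∑ R ∈ Icc 1 K, d R ≤ ∑ R ∈ Icc 1 K, d R * f R := by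
    intro K
    induction K with
    | zero => simp
    | succ K ih =>
      intro hK
      rw [sum_Icc_succ_top (by omega), sum_Icc_succ_top (by omega)]
      have hstep : f (K + 1) * ∑ R ∈ Icc 1 K, d R ≤ f K * ∑ R ∈ Icc 1 K, d R := by
        rcases K.eq_zero_or_pos with rfl | hK1
        · simp
        · exact mul_le_mul_of_nonneg_right
            (hf ⟨hK1, by omega⟩ ⟨by omega, hK⟩ K.le_succ) (hd K hK1 (by omega))
      linarith [ih (by omega)]
  rcases N.eq_zero_or_pos with rfl | hN
  · simp
  · exact (mul_nonneg hfN (hd N hN le_rfl)).trans (key N le_rfl)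

lemma rank_ratio_mem_Icc {N R : ℕ} (hR : 1 ≤ R) (hRN : R ≤ N) :
    ((R : ℝ) - 1) / ((N : ℝ) - 1) ∈ Set.Icc (0 : ℝ) 1 := by
  have hR' : (1 : ℝ) ≤ R := by exact_mod_cast hR
  have hRN' : (R : ℝ) ≤ N := by exact_mod_cast hRN
  exact ⟨div_nonneg (by linarith) (by linarith), div_le_one_of_le₀ (by linarith) (by linarith)⟩

theorem stmt_5_general (N : ℕ) (W₁ W₂ : ℕ → ℝ)
    (hdom : ∀ K, 1 ≤ K → K ≤ N →
      ∑ R ∈ Finset.Icc 1 K, W₂ R ≤ ∑ R ∈ Finset.Icc 1 K, W₁ R)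
    (n k : ℕ) :
    ∑ R ∈ Finset.Icc 1 N, W₂ R *
        (∑ l ∈ Finset.range k, ((n - 1).choose l : ℝ)
          * (((R : ℝ) - 1) / ((N : ℝ) - 1)) ^ l
          * (1 - ((R : ℝ) - 1) / ((N : ℝ) - 1)) ^ (n - 1 - l))
      ≤ ∑ R ∈ Finset.Icc 1 N, W₁ R *
        (∑ l ∈ Finset.range k, ((n - 1).choose l : ℝ)
          * (((R : ℝ) - 1) / ((N : ℝ) - 1)) ^ l
          * (1 - ((R : ℝ) - 1) / ((N : ℝ) - 1)) ^ (n - 1 - l)) := by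
  rcases N.eq_zero_or_pos with rfl | hN
  · simp
  set x : ℕ → ℝ := fun R => ((R : ℝ) - 1) / ((N : ℝ) - 1)
  have hf : AntitoneOn (fun R => binomCDF (n - 1) k (x R)) (Set.Icc 1 N) := by
    intro R hR S hS hRS
    refine binomCDF_antitoneOn (n - 1) k (rank_ratio_mem_Icc hR.1 hR.2)
      (rank_ratio_mem_Icc hS.1 hS.2) (div_le_div_of_nonneg_right ?_ ?_)
    · exact sub_le_sub_right (by exact_mod_cast hRS) 1
    · exact sub_nonneg.2 (by exact_mod_cast hN)
  have hgap := sum_Icc_mul_nonneg_of_antitoneOn (d := fun R => W₁ R - W₂ R) hf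
    (binomCDF_nonneg _ _ (rank_ratio_mem_Icc hN le_rfl))
    (fun K hK hKN => by simpa only [sum_sub_distrib, sub_nonneg] using hdom K hK hKN)
  simp only [sub_mul, sum_sub_distrib, sub_nonneg] at hgap
  exact hgap

/-- If `HR₁@K ≥ HR₂@K` for all `K`, then the expected sampling hit-ratios
(with binomial-CDF hit probabilities) satisfy `E[SHR₁@k] ≥ E[SHR₂@k]`. -/
theorem stmt_5 (N : ℕ) (hN : 2 ≤ N) (W₁ W₂ : ℕ → ℝ)
    (hW₁ : ∀ R, 0 ≤ W₁ R) (hW₂ : ∀ R, 0 ≤ W₂ R)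
    (hsum₁ : ∑ R ∈ Finset.Icc 1 N, W₁ R = 1)
    (hsum₂ : ∑ R ∈ Finset.Icc 1 N, W₂ R = 1)
    (hdom : ∀ K, 1 ≤ K → K ≤ N →
      ∑ R ∈ Finset.Icc 1 K, W₂ R ≤ ∑ R ∈ Finset.Icc 1 K, W₁ R)
    (n k : ℕ) (hn : 1 ≤ n) (hk1 : 1 ≤ k) (hkn : k ≤ n) :
    ∑ R ∈ Finset.Icc 1 N, W₂ R *
        (∑ l ∈ Finset.range k, ((n - 1).choose l : ℝ)
          * (((R : ℝ) - 1) / ((N : ℝ) - 1)) ^ l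
          * (1 - ((R : ℝ) - 1) / ((N : ℝ) - 1)) ^ (n - 1 - l))
      ≤ ∑ R ∈ Finset.Icc 1 N, W₁ R *
        (∑ l ∈ Finset.range k, ((n - 1).choose l : ℝ)
          * (((R : ℝ) - 1) / ((N : ℝ) - 1)) ^ l
          * (1 - ((R : ℝ) - 1) / ((N : ℝ) - 1)) ^ (n - 1 - l)) :=
  stmt_5_general N W₁ W₂ hdom n k
end

section
/- Let g be the real-valued sequence defined by g(1)^a = a(N-1)^a B(a, n) and g(k+1)^a = g(k)^a + a(N-1)^a C(n-1, k) B(a+k, n-k) for 1 ≤ k ≤ n-1, where a > 0. Then g(n) = N - 1 (equivalently, the mapping function satisfies f(n; a) = N). -/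
/-- The Beta function `B(x,y) = ∫₀¹ t^(x-1) (1-t)^(y-1) dt`. -/
noncomputable def betaFn (x y : ℝ) : ℝ :=
  ∫ t in (0:ℝ)..1, t ^ (x - 1) * (1 - t) ^ (y - 1)

/-! The recurrence telescopes: `g(n)^a = a(N-1)^a ∑_{k<n} C(n-1,k) B(a+k,n-k)`, and writing each
`B(a+k,n-k)` as an integral the binomial theorem collapses the sum to `∫₀¹ t^(a-1) dt = 1/a`.
Hence `g(n)^a = (N-1)^a`, and both sides are nonnegative. -/

open Finset

lemma sum_range_choose_mul_pow_mul_one_sub_pow {R : Type*} [CommRing R] (t : R) (m : ℕ) :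
    ∑ k ∈ range (m + 1), (m.choose k : R) * (t ^ k * (1 - t) ^ (m - k)) = 1 := by
  have h := (add_pow t (1 - t) m).symm
  rw [add_sub_cancel, one_pow] at h
  exact (sum_congr rfl fun k _ => by ring).trans h

lemma betaFn_add_natCast_natCast_add_one (a : ℝ) (k j : ℕ) :
    betaFn (a + k) (j + 1) = ∫ t in (0:ℝ)..1, t ^ (a - 1) * (t ^ k * (1 - t) ^ j) := by
  refine intervalIntegral.integral_congr_ae (.of_forall fun t ht => ?_)
  rw [Set.uIoc_of_le zero_le_one] at ht
  have hexp : a + k - 1 = (a - 1) + k := by ring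
  simp only [hexp, add_sub_cancel_right, Real.rpow_natCast]
  rw [Real.rpow_add ht.1, Real.rpow_natCast, mul_assoc]

lemma sum_choose_mul_betaFn {a : ℝ} (ha : 0 < a) {n : ℕ} (hn : 1 ≤ n) :
    ∑ k ∈ range n, ((n - 1).choose k : ℝ) * betaFn (a + k) ((n : ℝ) - k) = 1 / a := by
  obtain ⟨m, rfl⟩ : ∃ m, n = m + 1 := ⟨n - 1, by omega⟩
  set p : ℕ → ℝ → ℝ := fun k t => (m.choose k : ℝ) * (t ^ k * (1 - t) ^ (m - k))
  have hterm : ∀ k ∈ range (m + 1), (m.choose k : ℝ) * betaFn (a + k) ((m + 1 : ℕ) - k)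
      = ∫ t in (0:ℝ)..1, t ^ (a - 1) * p k t := by
    intro k hk
    have hcast : ((m + 1 : ℕ) : ℝ) - k = ((m - k : ℕ) : ℝ) + 1 := by
      rw [Nat.cast_sub (Nat.lt_succ_iff.mp (mem_range.mp hk))]
      push_cast
      ring
    rw [hcast, betaFn_add_natCast_natCast_add_one, ← intervalIntegral.integral_const_mul]
    exact intervalIntegral.integral_congr fun t _ => by ring
  have hint : ∀ k ∈ range (m + 1),
      IntervalIntegrable (fun t => t ^ (a - 1) * p k t) MeasureTheory.volume 0 1 :=
    fun k _ => (intervalIntegral.intervalIntegrable_rpow' (by linarith)).mul_continuousOn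
      (by fun_prop)
  rw [add_tsub_cancel_right, sum_congr rfl hterm,
    ← intervalIntegral.integral_finsetSum hint]
  simp only [← mul_sum, p, sum_range_choose_mul_pow_mul_one_sub_pow, mul_one]
  rw [integral_rpow (Or.inl (by linarith)), sub_add_cancel, Real.one_rpow,
    Real.zero_rpow ha.ne']
  ring

lemma eq_sum_range_of_eq_add {M : Type*} [AddCommMonoid M] {u d : ℕ → M} {n : ℕ}
    (h1 : u 1 = d 0) (hsucc : ∀ k, 1 ≤ k → k < n → u (k + 1) = u k + d k) :
    ∀ k, 1 ≤ k → k ≤ n → u k = ∑ j ∈ range k, d j := by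
  intro k hk1 hkn
  induction k, hk1 using Nat.le_induction with
  | base => simp [h1]
  | succ k hk ih => rw [hsucc k hk (by omega), ih (by omega), sum_range_succ]

/-- The Beta-mapping sequence `g(k) = f(k;a) − 1` defined by
`g(1)^a = a(N-1)^a B(a,n)` and
`g(k+1)^a = g(k)^a + a(N-1)^a C(n-1,k) B(a+k,n-k)` satisfies `g(n) = N − 1`,
i.e. `f(n;a) = N`. -/
theorem stmt_9 (a : ℝ) (ha : 0 < a) (N n : ℕ) (hN : 2 ≤ N) (hn : 1 ≤ n)
    (g : ℕ → ℝ) (hg_nonneg : ∀ k, 0 ≤ g k)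
    (hg1 : g 1 ^ a = a * ((N : ℝ) - 1) ^ a * betaFn a n)
    (hgrec : ∀ k : ℕ, 1 ≤ k → k ≤ n - 1 →
      g (k + 1) ^ a = g k ^ a
        + a * ((N : ℝ) - 1) ^ a * ((n - 1).choose k : ℝ)
          * betaFn (a + k) ((n : ℝ) - k)) :
    g n = (N : ℝ) - 1 := by
  have hN1 : (0:ℝ) ≤ (N : ℝ) - 1 := by
    have : (2:ℝ) ≤ N := by exact_mod_cast hN
    linarith
  have hsum := eq_sum_range_of_eq_add (u := fun k => g k ^ a)
    (d := fun k => a * ((N : ℝ) - 1) ^ a *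
      (((n - 1).choose k : ℝ) * betaFn (a + k) ((n : ℝ) - k)))
    (by simpa using hg1)
    (fun k hk hkn => by rw [hgrec k hk (by omega), mul_assoc]) n hn le_rfl
  have hpow : g n ^ a = ((N : ℝ) - 1) ^ a := by
    rw [hsum, ← mul_sum, sum_choose_mul_betaFn ha hn]
    field_simp
  exact (Real.rpow_left_inj (hg_nonneg n) hN1 ha.ne').1 hpow
end
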